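/- arXiv:1401.5282 — 4 statements merged into one kernel-verified Lean document; each statement's English description precedes it below -/
import Mathlib

section
/- Let a, b > 0 with a/b irrational, and let C ∈ ℝ. Then for every ε > 0 there exists T > 0 such that the set { k₁ a + k₂ b + C : k₁, k₂ ∈ ℕ } is ε-dense in [T, ∞); i.e., every t ≥ T is within ε of some element of this set. -/
open MeasureTheory Filter Topology

section Defs

variable {Y : Type*}

def FlowLike [TopologicalSpace Y] (φ : ℝ → Y → Y) : Prop :=
  Continuous (Function.uncurry φ) ∧ (∀ x, φ 0 x = x) ∧ ∀ s t x, φ (s + t) x = φ s (φ t x)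

def Invariant [MeasurableSpace Y] (φ : ℝ → Y → Y) (μ : Measure Y) : Prop :=
  ∀ t : ℝ, Measure.map (φ t) μ = μ

noncomputable def periodicOrbitMeasure [MeasurableSpace Y] (φ : ℝ → Y → Y) (x₀ : Y) (l : ℝ) :
    Measure Y :=
  (ENNReal.ofReal l)⁻¹ • Measure.map (fun t => φ t x₀) (volume.restrict (Set.Ico (0:ℝ) l))

/-- The measure `μ` is the normalized arc-length measure on a periodic orbit. -/
def IsPeriodicOrbitMeasure [MeasurableSpace Y] (φ : ℝ → Y → Y) (μ : Measure Y) : Prop :=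
  ∃ x₀ : Y, ∃ l : ℝ, 0 < l ∧ φ l x₀ = x₀ ∧ μ = periodicOrbitMeasure φ x₀ l

def StronglyMixing [MeasurableSpace Y] (φ : ℝ → Y → Y) (μ : Measure Y) : Prop :=
  ∀ A B : Set Y, MeasurableSet A → MeasurableSet B →
    Tendsto (fun t : ℝ => μ (A ∩ (φ t) ⁻¹' B)) atTop (nhds (μ A * μ B))

def ErgodicFlow [MeasurableSpace Y] (φ : ℝ → Y → Y) (μ : Measure Y) : Prop :=
  Invariant φ μ ∧ ∀ A : Set Y, MeasurableSet A → (∀ t : ℝ, (φ t) ⁻¹' A = A) → μ A = 0 ∨ μ A = 1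

def prodFlow (φ : ℝ → Y → Y) : ℝ → Y × Y → Y × Y := fun t p => (φ t p.1, φ t p.2)

def WeaklyMixing [MeasurableSpace Y] (φ : ℝ → Y → Y) (μ : Measure Y) [SFinite μ] : Prop :=
  ErgodicFlow (prodFlow φ) (μ.prod μ)

def ClosingLemma [MetricSpace Y] (φ : ℝ → Y → Y) : Prop :=
  ∀ v : Y, ∀ ε > (0:ℝ), ∃ V ∈ nhds v, ∃ δ > (0:ℝ), ∃ t₀ > (0:ℝ),
    ∀ w ∈ V, ∀ t > t₀, dist w (φ t w) < δ → φ t w ∈ V →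
      ∃ p₀ : Y, ∃ lp > (0:ℝ), |lp - t| < ε ∧ φ lp p₀ = p₀ ∧
        ∀ s : ℝ, 0 < s → s < min t lp → dist (φ s p₀) (φ s w) < ε

noncomputable def partEntropy [MeasurableSpace Y] (μ : Measure Y) (P : Finset (Set Y)) : ℝ :=
  -∑ q ∈ P, ((μ q).toReal * Real.log (μ q).toReal)

noncomputable def refinePart (T : Y → Y) (n : ℕ) (P : Finset (Set Y)) : Finset (Set Y) :=
  letI := Classical.decEq (Set Y)
  (Fintype.piFinset fun _ : Fin n => P).image fun f => ⋂ i : Fin n, (T^[(i : ℕ)]) ⁻¹' f i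

noncomputable def entTP [MeasurableSpace Y] (μ : Measure Y) (T : Y → Y) (P : Finset (Set Y)) : ℝ :=
  Filter.liminf (fun n : ℕ => partEntropy μ (refinePart T n P) / n) atTop

def IsFinPartition [MeasurableSpace Y] (P : Finset (Set Y)) : Prop :=
  (∀ q ∈ P, MeasurableSet q) ∧ (⋃ q ∈ P, q) = Set.univ ∧
    ∀ q ∈ P, ∀ q' ∈ P, q ≠ q' → Disjoint q q'

noncomputable def entT [MeasurableSpace Y] (μ : Measure Y) (T : Y → Y) : ℝ :=
  ⨆ P : {P : Finset (Set Y) // IsFinPartition P}, entTP μ T (P : Finset (Set Y))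

end Defs

/-! Dirichlet's approximation theorem gives `n, m ∈ ℕ` with `0 < |n a - m b| = δ ≤ ε`, the
positivity coming from the irrationality of `a / b`; say `δ = n a - m b`. Write `t = K b + r` with
`0 ≤ r < b` and `r = j δ + s` with `0 ≤ s < δ`. Then `j n a + (K - j m) b = K b + j δ = t - s` lies
within `δ` of `t`, and `K - j m` is a natural number as soon as `t` is large, since `j < b / δ`. -/

lemma exists_nat_sub_mul_mem_Ico {δ x : ℝ} (hδ : 0 < δ) (hx : 0 ≤ x) :
    ∃ k : ℕ, x - k * δ ∈ Set.Ico 0 δ := by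
  refine ⟨⌊x / δ⌋₊, ?_, ?_⟩
  · have := Nat.floor_le (div_nonneg hx hδ.le)
    rw [le_div_iff₀ hδ] at this
    linarith
  · have := Nat.lt_floor_add_one (x / δ)
    rw [div_lt_iff₀ hδ] at this
    linarith

lemma Irrational.exists_nat_abs_mul_sub_nat_pos_lt {ξ : ℝ} (hξ : Irrational ξ) (hξ₀ : 0 < ξ)
    {ε : ℝ} (hε : 0 < ε) : ∃ n m : ℕ, 0 < |n * ξ - m| ∧ |n * ξ - m| < ε := by
  obtain ⟨N, hN⟩ := exists_nat_gt ε⁻¹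
  have hN₀ : 0 < N := by exact_mod_cast (inv_pos.2 hε).trans hN
  obtain ⟨n, hn₀, -, hn⟩ := Real.exists_nat_abs_mul_sub_round_le ξ hN₀
  have hround : 0 ≤ round (n * ξ) := by
    rw [round_eq]
    exact Int.floor_nonneg.2 (by positivity)
  lift round (n * ξ) to ℕ using hround with m
  refine ⟨n, m, abs_pos.2 (sub_ne_zero.2 ?_), ?_⟩
  · exact (hξ.natCast_mul hn₀.ne').ne_nat m
  · refine (by exact_mod_cast hn : |n * ξ - m| ≤ 1 / (N + 1)).trans_lt ?_
    rw [div_lt_iff₀ (by positivity), ← div_lt_iff₀' hε, one_div]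
    linarith

lemma exists_nat_add_mem_Ioc_of_sub_pos {a b : ℝ} (hb : 0 < b) {n m : ℕ}
    (hδ : 0 < n * a - m * b) : ∃ T, ∀ t ≥ T, ∃ k₁ k₂ : ℕ,
      (k₁ : ℝ) * a + k₂ * b ∈ Set.Ioc (t - (n * a - m * b)) t := by
  set δ := (n : ℝ) * a - m * b
  refine ⟨b * (m * b / δ + 1), fun t ht => ?_⟩
  have ht₀ : 0 ≤ t := le_trans (by positivity) ht
  obtain ⟨K, hr₀, hrb⟩ := exists_nat_sub_mul_mem_Ico hb ht₀
  obtain ⟨j, hs₀, hsδ⟩ := exists_nat_sub_mul_mem_Ico hδ hr₀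
  have hjm : j * m ≤ K := by
    have hjb : j * δ < b := by linarith
    have hKb : m * b / δ * b < K * b := by nlinarith
    have hmK : (m : ℝ) * b / δ < K := lt_of_mul_lt_mul_right hKb hb.le
    have hjm : (j : ℝ) * m ≤ m * b / δ := by
      rw [le_div_iff₀ hδ]
      nlinarith [(Nat.cast_nonneg (α := ℝ) m)]
    exact_mod_cast (hjm.trans hmK.le)
  refine ⟨j * n, K - j * m, ?_, ?_⟩ <;> push_cast [Nat.cast_sub hjm] <;> linarith

lemma exists_nat_abs_add_sub_le_of_abs_sub_pos {a b : ℝ} (ha : 0 < a) (hb : 0 < b) {n m : ℕ}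
    (hδ : 0 < |n * a - m * b|) : ∃ T, ∀ t ≥ T, ∃ k₁ k₂ : ℕ,
      |(k₁ : ℝ) * a + k₂ * b - t| ≤ |n * a - m * b| := by
  rcases lt_or_gt_of_ne (abs_pos.1 hδ) with hneg | hpos
  · obtain ⟨T, hT⟩ := exists_nat_add_mem_Ioc_of_sub_pos ha (a := b) (n := m) (m := n)
      (by linarith)
    refine ⟨T, fun t ht => ?_⟩
    obtain ⟨k₂, k₁, hlo, hhi⟩ := hT t ht
    exact ⟨k₁, k₂, by rw [abs_of_neg hneg, abs_le]; constructor <;> linarith⟩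
  · obtain ⟨T, hT⟩ := exists_nat_add_mem_Ioc_of_sub_pos hb hpos
    refine ⟨T, fun t ht => ?_⟩
    obtain ⟨k₁, k₂, hlo, hhi⟩ := hT t ht
    exact ⟨k₁, k₂, by rw [abs_of_pos hpos, abs_le]; constructor <;> linarith⟩

/-- If `a, b > 0` with `a/b` irrational and `C ∈ ℝ`, then for every `ε > 0`
the set `{k₁a + k₂b + C : k₁, k₂ ∈ ℕ}` is `ε`-dense in some half-line `[T, ∞)`. -/
theorem stmt11 (a b : ℝ) (ha : 0 < a) (hb : 0 < b) (hab : Irrational (a / b)) (C : ℝ) :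
    ∀ ε > (0:ℝ), ∃ T > (0:ℝ), ∀ t ≥ T,
      ∃ k₁ k₂ : ℕ, |(k₁ : ℝ) * a + (k₂ : ℝ) * b + C - t| ≤ ε := by
  intro ε hε
  obtain ⟨n, m, hpos, hlt⟩ :=
    hab.exists_nat_abs_mul_sub_nat_pos_lt (div_pos ha hb) (div_pos hε hb)
  have hscale : |(n : ℝ) * a - m * b| = b * |n * (a / b) - m| := by
    rw [← abs_of_pos hb, ← abs_mul, abs_of_pos hb]
    congr 1
    field_simp
  obtain ⟨T, hT⟩ := exists_nat_abs_add_sub_le_of_abs_sub_pos ha hb (n := n) (m := m)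
    (by rw [hscale]; positivity)
  refine ⟨max 1 (T + C), by positivity, fun t ht => ?_⟩
  obtain ⟨k₁, k₂, hk⟩ := hT (t - C) (by linarith [le_max_right 1 (T + C)])
  refine ⟨k₁, k₂, ?_⟩
  calc |(k₁ : ℝ) * a + k₂ * b + C - t| = |(k₁ : ℝ) * a + k₂ * b - (t - C)| := by ring_nf
    _ ≤ b * |n * (a / b) - m| := hscale ▸ hk
    _ ≤ ε := ((lt_div_iff₀' hb).1 hlt).le
end

section
/- Let (φ^t) be a continuous flow on a metric space X satisfying: (closing lemma) every point has a neighborhood in which sufficiently-long almost-closed orbit segments are ε-shadowed by genuine periodic orbits, and (topological mixing on X). Then for every ε > 0 and every nonempty open U ⊆ X there exists T > 0 such that for all t ≥ T there is a periodic point of some period l with |l − t| < ε. In particular, the set of periods of periodic orbits is non-arithmetic (not contained in a discrete subgroup c·ℤ of ℝ). -/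
open MeasureTheory Filter Topology

/-!
The closing lemma at a point `v` gives a neighbourhood `V`, a tolerance `δ` and a time `t₀`. Mixing
applied to a small ball `B ⊆ V` around `v` (of radius at most `δ / 2`) with itself produces, for
every large `t`, a point `w ∈ B` with `φ t w ∈ B`; this orbit segment is `δ`-almost closed, so it
is shadowed by a periodic orbit of period within `ε` of `t`. Periods that come arbitrarily close
to every large time cannot lie in `c ℤ`: the time `|c| (m + 1/2)` is at distance `|c| / 2` from it.
-/

def TopologicallyMixing {Y : Type*} [TopologicalSpace Y] (φ : ℝ → Y → Y) : Prop :=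
  ∀ U V : Set Y, IsOpen U → IsOpen V → U.Nonempty → V.Nonempty →
    ∃ T : ℝ, ∀ t ≥ T, ((φ t) '' U ∩ V).Nonempty

def periods {Y : Type*} (φ : ℝ → Y → Y) : Set ℝ :=
  {l | 0 < l ∧ ∃ p, φ l p = p}

theorem exists_mem_periods_abs_sub_lt {X : Type*} [MetricSpace X] {φ : ℝ → X → X}
    (hclose : ClosingLemma φ) (hmix : TopologicallyMixing φ) (v : X) {ε : ℝ} (hε : 0 < ε) :
    ∃ T > 0, ∀ t ≥ T, ∃ l ∈ periods φ, |l - t| < ε := by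
  obtain ⟨V, hV, δ, hδ, t₀, ht₀, hshadow⟩ := hclose v ε hε
  obtain ⟨r, hr, hrV⟩ :=
    Metric.mem_nhds_iff.mp (Filter.inter_mem hV (Metric.ball_mem_nhds v (half_pos hδ)))
  obtain ⟨T, hT⟩ := hmix _ _ Metric.isOpen_ball Metric.isOpen_ball
    ⟨v, Metric.mem_ball_self hr⟩ ⟨v, Metric.mem_ball_self hr⟩
  refine ⟨max T t₀ + 1, by positivity, fun t ht => ?_⟩
  obtain ⟨_, ⟨w, hw, rfl⟩, hwt⟩ := hT t (by linarith [le_max_left T t₀])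
  have hwV := hrV hw
  have hwtV := hrV hwt
  have hclosed : dist w (φ t w) < δ := calc
    dist w (φ t w) ≤ dist w v + dist (φ t w) v := dist_triangle_right _ _ _
    _ < δ / 2 + δ / 2 := add_lt_add hwV.2 hwtV.2
    _ = δ := add_halves δ
  obtain ⟨p, l, hl, hlt, hp, -⟩ :=
    hshadow w hwV.1 t (by linarith [le_max_right T t₀]) hclosed hwtV.1
  exact ⟨l, ⟨hl, p, hp⟩, hlt⟩

theorem half_le_abs_intCast_sub_half (k : ℤ) : 1 / 2 ≤ |(k : ℝ) - 1 / 2| := by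
  rcases le_or_gt k 0 with hk | hk
  · have : (k : ℝ) ≤ 0 := by exact_mod_cast hk
    rw [le_abs]; right; linarith
  · have : (1 : ℝ) ≤ k := by exact_mod_cast hk
    rw [le_abs]; left; linarith

theorem exists_mem_notMem_zmultiples {S : Set ℝ}
    (hS : ∀ ε > 0, ∃ T, ∀ t ≥ T, ∃ s ∈ S, |s - t| < ε) (c : ℝ) :
    ∃ s ∈ S, s ∉ AddSubgroup.zmultiples c := by
  rcases eq_or_ne c 0 with rfl | hc
  · obtain ⟨T, hT⟩ := hS 1 one_pos
    obtain ⟨s, hs, hst⟩ := hT (|T| + 1) (by linarith [le_abs_self T])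
    refine ⟨s, hs, ?_⟩
    rw [AddSubgroup.zmultiples_zero_eq_bot, AddSubgroup.mem_bot]
    linarith [abs_lt.mp hst, abs_nonneg T]
  · rw [← zmultiples_abs]
    set a := |c|
    have ha : 0 < a := abs_pos.mpr hc
    obtain ⟨T, hT⟩ := hS (a / 2) (half_pos ha)
    set m := ⌈T / a⌉
    have hTm : T ≤ a * m := by rw [← div_le_iff₀' ha]; exact Int.le_ceil _
    obtain ⟨s, hs, hst⟩ := hT (a * (m + 1 / 2)) (by nlinarith)
    refine ⟨s, hs, fun hsa => hst.not_ge ?_⟩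
    obtain ⟨k, hk⟩ := AddSubgroup.mem_zmultiples_iff.mp hsa
    calc a / 2 = a * (1 / 2) := by ring
      _ ≤ a * |((k - m : ℤ) : ℝ) - 1 / 2| := by gcongr; exact half_le_abs_intCast_sub_half _
      _ = |a * (((k - m : ℤ) : ℝ) - 1 / 2)| := by rw [abs_mul, abs_of_pos ha]
      _ = |s - a * (m + 1 / 2)| := by rw [← hk, zsmul_eq_mul]; push_cast; ring_nf

theorem stmt12_general {X : Type*} [MetricSpace X] [Nonempty X]
    (φ : ℝ → X → X) (hclose : ClosingLemma φ)
    (hmix : ∀ U V : Set X, IsOpen U → IsOpen V → U.Nonempty → V.Nonempty →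
      ∃ T : ℝ, ∀ t ≥ T, ((φ t) '' U ∩ V).Nonempty) :
    (∀ ε > (0:ℝ), ∀ U : Set X, IsOpen U → U.Nonempty →
      ∃ T > (0:ℝ), ∀ t ≥ T, ∃ p : X, ∃ lp : ℝ, 0 < lp ∧ φ lp p = p ∧ |lp - t| < ε) ∧
    ¬ ∃ c : ℝ, ∀ lp : ℝ, 0 < lp → (∃ p : X, φ lp p = p) → ∃ n : ℤ, lp = c * n := by
  obtain ⟨v⟩ := ‹Nonempty X›
  have hperiods (ε : ℝ) (hε : 0 < ε) := exists_mem_periods_abs_sub_lt hclose hmix v hε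
  refine ⟨fun ε hε _ _ _ => ?_, fun ⟨c, hc⟩ => ?_⟩
  · obtain ⟨T, hT, h⟩ := hperiods ε hε
    refine ⟨T, hT, fun t ht => ?_⟩
    obtain ⟨l, ⟨hl, p, hp⟩, hlt⟩ := h t ht
    exact ⟨p, l, hl, hp, hlt⟩
  · obtain ⟨l, ⟨hl, hp⟩, hlc⟩ := exists_mem_notMem_zmultiples
      (fun ε hε => (hperiods ε hε).imp fun _ => And.right) c
    obtain ⟨n, rfl⟩ := hc l hl hp
    exact hlc (AddSubgroup.mem_zmultiples_iff.mpr ⟨n, by rw [zsmul_eq_mul, mul_comm]⟩)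

/-- A topologically mixing flow satisfying the closing lemma has, near any
nonempty open set, periodic orbits of every sufficiently large approximate period; in
particular the set of periods is not contained in a discrete subgroup `c·ℤ` of `ℝ`. -/
theorem stmt12 {X : Type*} [MetricSpace X] [Nonempty X]
    (φ : ℝ → X → X) (hφ : FlowLike φ) (hclose : ClosingLemma φ)
    (hmix : ∀ U V : Set X, IsOpen U → IsOpen V → U.Nonempty → V.Nonempty →
      ∃ T : ℝ, ∀ t ≥ T, ((φ t) '' U ∩ V).Nonempty) :
    (∀ ε > (0:ℝ), ∀ U : Set X, IsOpen U → U.Nonempty →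
      ∃ T > (0:ℝ), ∀ t ≥ T, ∃ p : X, ∃ lp : ℝ, 0 < lp ∧ φ lp p = p ∧ |lp - t| < ε) ∧
    ¬ ∃ c : ℝ, ∀ lp : ℝ, 0 < lp → (∃ p : X, φ lp p = p) → ∃ n : ℤ, lp = c * n :=
  stmt12_general φ hclose hmix
end

section
/- Let X be a Polish space with a continuous flow (φ^t). Suppose μ₁, ..., μ_n are Dirac measures on periodic orbits with periods l₁, ..., l_n, and suppose for each N ∈ ℕ there is a periodic orbit of period L_N = ∑_i N p_i l_i + O(1) (with p_i fixed positive integers and the O(1) term bounded uniformly in N) whose orbit spends time N p_i l_i within distance ε_N of the orbit of μ_i, with ε_N → 0. Then the Dirac measures on these periodic orbits converge in the weak-* topology to ∑_i (p_i l_i / ∑_j p_j l_j) μ_i as N → ∞. -/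
/-!
Write `g_N t = f (φ t y_N)`. On the `i`-th winding window `[s_i, s_i + N p_i l_i]` the orbit
of `y_N` stays `ε_N`-close to the `l_i`-periodic orbit of `x_i`, so by uniform continuity of `f`
and periodicity the integral of `g_N` over that window is `N p_i ∫_0^{l_i} f (φ t x_i)` up to
`o(N)`. The windows are disjoint and the rest of `[0, L_N]` has length at most `C`, so it
contributes `O(1)`. Dividing by `L_N = N ∑ p_j l_j + O(1)` gives the limit.
-/

open MeasureTheory Filter Topology

open Set Function

theorem intervalIntegral_add_natCast_mul_period {g : ℝ → ℝ} (hg : Continuous g) {l : ℝ}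
    (hper : Periodic g l) (τ : ℝ) (k : ℕ) :
    ∫ t in (0 : ℝ)..k * l, g (τ + t) = k * ∫ t in (0 : ℝ)..l, g t := by
  have := hper.intervalIntegral_add_zsmul_eq k τ fun a b => hg.intervalIntegrable a b
  rw [hper.intervalIntegral_add_eq τ 0, zero_add] at this
  rw [intervalIntegral.integral_comp_add_left g τ, add_zero]
  simpa using this

theorem tendsto_div_natCast_of_abs_sub_le {u : ℕ → ℝ} {a K : ℝ}
    (h : ∀ η > 0, ∀ᶠ N : ℕ in atTop, |u N - N * a| ≤ η * N + K) :
    Tendsto (fun N => u N / N) atTop (𝓝 a) := by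
  refine Metric.tendsto_nhds.2 fun η hη => ?_
  have hK : ∀ᶠ N : ℕ in atTop, K / N < η / 2 :=
    (tendsto_const_div_atTop_nhds_zero_nat K).eventually (gt_mem_nhds (half_pos hη))
  filter_upwards [h (η / 2) (half_pos hη), hK, eventually_gt_atTop 0] with N hu hKN hN
  have hN' : (0 : ℝ) < N := Nat.cast_pos.2 hN
  rw [div_lt_iff₀ hN'] at hKN
  rw [Real.dist_eq, show u N / N - a = (u N - N * a) / N by field_simp, abs_div, Nat.abs_cast,
    div_lt_iff₀ hN']
  linarith

theorem tendsto_div_of_abs_sub_natCast_mul_le {u v : ℕ → ℝ} {a b K C : ℝ} (hb : b ≠ 0)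
    (hu : ∀ η > 0, ∀ᶠ N : ℕ in atTop, |u N - N * a| ≤ η * N + K)
    (hv : ∀ N : ℕ, |v N - N * b| ≤ C) : Tendsto (fun N => u N / v N) atTop (𝓝 (a / b)) := by
  have hv' : Tendsto (fun N => v N / N) atTop (𝓝 b) :=
    tendsto_div_natCast_of_abs_sub_le (K := C) fun η hη =>
      Eventually.of_forall fun N => (hv N).trans (le_add_of_nonneg_left (by positivity))
  refine ((tendsto_div_natCast_of_abs_sub_le hu).div hv' hb).congr' ?_
  filter_upwards [eventually_ne_atTop 0] with N hN
  simp only [Pi.div_apply, div_div_div_cancel_right₀ (Nat.cast_ne_zero.2 hN : (N : ℝ) ≠ 0)]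

theorem abs_integral_sub_sum_integral_le {ι : Type*} [Fintype ι] {g : ℝ → ℝ} {B L : ℝ}
    (hg : IntegrableOn g (Ioc 0 L)) (hB : ∀ t ∈ Ioc 0 L, ‖g t‖ ≤ B) (hL : 0 ≤ L) {a M : ι → ℝ}
    (hM : ∀ i, 0 ≤ M i) (ha : ∀ i, 0 ≤ a i) (haL : ∀ i, a i + M i ≤ L)
    (hdisj : Pairwise (Disjoint on fun i => Ioo (a i) (a i + M i))) :
    |(∫ t in (0 : ℝ)..L, g t) - ∑ i, ∫ t in (0 : ℝ)..M i, g (a i + t)| ≤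
      B * (L - ∑ i, M i) := by
  set U := ⋃ i, Ioo (a i) (a i + M i)
  have hU : MeasurableSet U := MeasurableSet.iUnion fun i => measurableSet_Ioo
  have hUsub : U ⊆ Ioc 0 L :=
    iUnion_subset fun i t ht => ⟨(ha i).trans_lt ht.1, ht.2.le.trans (haL i)⟩
  have hsegment : ∀ i, ∫ t in (0 : ℝ)..M i, g (a i + t) = ∫ t in Ioo (a i) (a i + M i), g t :=
    fun i => by
      rw [intervalIntegral.integral_comp_add_left, add_zero,
        intervalIntegral.integral_of_le (le_add_of_nonneg_right (hM i)),
        integral_Ioc_eq_integral_Ioo]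
  have hvolU : volume.real U = ∑ i, M i := by
    rw [measureReal_iUnion_fintype hdisj (fun i => measurableSet_Ioo)
      fun i => measure_Ioo_lt_top.ne]
    simp only [Real.volume_real_Ioo_of_le (le_add_of_nonneg_right (hM _)), add_sub_cancel_left]
  rw [intervalIntegral.integral_of_le hL, Finset.sum_congr rfl fun i _ => hsegment i,
    ← integral_iUnion_fintype (fun i => measurableSet_Ioo) hdisj
      (fun i => hg.mono_set (subset_iUnion_of_subset i le_rfl |>.trans hUsub)),
    ← setIntegral_sdiff hU hg hUsub, ← Real.norm_eq_abs]
  calc ‖∫ t in Ioc 0 L \ U, g t‖ ≤ B * volume.real (Ioc 0 L \ U) :=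
        norm_setIntegral_le_of_norm_le_const
          ((measure_mono sdiff_subset).trans_lt measure_Ioc_lt_top)
          fun t ht => hB t (sdiff_subset ht)
    _ = B * (L - ∑ i, M i) := by
        rw [measureReal_sdiff hUsub hU measure_Ioc_lt_top.ne, Real.volume_real_Ioc_of_le hL,
          hvolU, sub_zero]

section Flow

variable {X : Type*} [TopologicalSpace X] {φ : ℝ → X → X}

theorem FlowLike.continuous_orbit (hφ : FlowLike φ) (z : X) : Continuous fun t => φ t z :=
  hφ.1.uncurry_right z

theorem FlowLike.periodic_orbit (hφ : FlowLike φ) {z : X} {l : ℝ} (hz : φ l z = z) :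
    Periodic (fun t => φ t z) l := fun t => by
  simp only [hφ.2.2 t l z, hz]

theorem integral_periodicOrbitMeasure [MeasurableSpace X] [BorelSpace X]
    {z : X} (hz : Continuous fun t => φ t z) {f : X → ℝ} (hf : Continuous f) {l : ℝ} (hl : 0 ≤ l) :
    ∫ w, f w ∂(periodicOrbitMeasure φ z l) = (∫ t in (0 : ℝ)..l, f (φ t z)) / l := by
  rw [periodicOrbitMeasure, integral_smul_measure,
    integral_map hz.aemeasurable hf.aestronglyMeasurable, integral_Ico_eq_integral_Ioo,
    intervalIntegral.integral_of_le hl, integral_Ioc_eq_integral_Ioo,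
    ENNReal.toReal_inv, ENNReal.toReal_ofReal hl, smul_eq_mul, inv_mul_eq_div]

theorem abs_integral_segment_sub_le (hφ : FlowLike φ) {f : X → ℝ} (hf : Continuous f)
    {x y : X} {l : ℝ} (hl : 0 ≤ l) (hx : φ l x = x) (k : ℕ) {s τ η : ℝ}
    (hclose : ∀ t ∈ Icc 0 (k * l), dist (f (φ (s + t) y)) (f (φ (τ + t) x)) ≤ η) :
    |(∫ t in (0 : ℝ)..k * l, f (φ (s + t) y)) - k * ∫ t in (0 : ℝ)..l, f (φ t x)| ≤
      η * (k * l) := by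
  have hshift : ∀ z r, Continuous fun t => f (φ (r + t) z) := fun z r =>
    hf.comp ((hφ.continuous_orbit z).comp (continuous_const_add r))
  have hgx : Continuous fun t => f (φ t x) := hf.comp (hφ.continuous_orbit x)
  have hkl : 0 ≤ (k : ℝ) * l := by positivity
  have hper : Periodic (fun t => f (φ t x)) l := fun t => by
    simp only [(hφ.periodic_orbit hx) t]
  rw [← intervalIntegral_add_natCast_mul_period hgx hper τ k,
    ← intervalIntegral.integral_sub ((hshift y s).intervalIntegrable _ _)
      ((hshift x τ).intervalIntegrable _ _)]
  have hbound := intervalIntegral.norm_integral_le_of_norm_le_const (a := 0) (b := k * l)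
    (f := fun t => f (φ (s + t) y) - f (φ (τ + t) x)) (C := η) fun t ht =>
      hclose t (Ioc_subset_Icc_self (by rwa [uIoc_of_le hkl] at ht))
  simpa [abs_of_nonneg hkl] using hbound

theorem abs_integral_orbit_sub_sum_le {ι : Type*} [Fintype ι] (hφ : FlowLike φ) {f : X → ℝ}
    (hf : Continuous f) {B : ℝ} (hB : ∀ z, |f z| ≤ B) {y : X} {L : ℝ} (hL : 0 ≤ L)
    {x : ι → X} {l : ι → ℝ} (hl : ∀ i, 0 ≤ l i) (hx : ∀ i, φ (l i) (x i) = x i)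
    (k : ι → ℕ) {M a τ : ι → ℝ} (hM : ∀ i, M i = k i * l i) (ha : ∀ i, 0 ≤ a i)
    (haL : ∀ i, a i + M i ≤ L) (hdisj : Pairwise (Disjoint on fun i => Ioo (a i) (a i + M i)))
    {η : ℝ} (hclose : ∀ i, ∀ t ∈ Icc 0 (M i),
      dist (f (φ (a i + t) y)) (f (φ (τ i + t) (x i))) ≤ η) :
    |(∫ t in (0 : ℝ)..L, f (φ t y)) - ∑ i, k i * ∫ t in (0 : ℝ)..l i, f (φ t (x i))| ≤
      η * ∑ i, M i + B * (L - ∑ i, M i) := by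
  have hgap := abs_integral_sub_sum_integral_le (hf.comp (hφ.continuous_orbit y)).integrableOn_Ioc
    (fun t _ => (hB _).trans_eq' (Real.norm_eq_abs _)) hL
    (fun i => (hM i).symm ▸ mul_nonneg (Nat.cast_nonneg _) (hl i)) ha haL hdisj
  have hsegments : ∀ i, |(∫ t in (0 : ℝ)..M i, f (φ (a i + t) y)) -
      k i * ∫ t in (0 : ℝ)..l i, f (φ t (x i))| ≤ η * M i := fun i => by
    simpa only [hM i] using
      abs_integral_segment_sub_le hφ hf (hl i) (hx i) (k i) (by simpa only [← hM i] using hclose i)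
  calc _ = |((∫ t in (0 : ℝ)..L, f (φ t y)) - ∑ i, ∫ t in (0 : ℝ)..M i, f (φ (a i + t) y)) +
        ∑ i, ((∫ t in (0 : ℝ)..M i, f (φ (a i + t) y)) -
          k i * ∫ t in (0 : ℝ)..l i, f (φ t (x i)))| := by
        rw [Finset.sum_sub_distrib, sub_add_sub_cancel]
    _ ≤ B * (L - ∑ i, M i) + ∑ i, η * M i :=
        (abs_add_le _ _).trans (add_le_add hgap
          ((Finset.abs_sum_le_sum_abs _ _).trans (Finset.sum_le_sum fun i _ => hsegments i)))
    _ = η * ∑ i, M i + B * (L - ∑ i, M i) := by rw [Finset.mul_sum, add_comm]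

end Flow

theorem stmt18_general {X : Type*} [MetricSpace X] [MeasurableSpace X] [BorelSpace X]
    (φ : ℝ → X → X) (hφ : FlowLike φ)
    (n : ℕ) (hn : 0 < n)
    (x : Fin n → X) (l : Fin n → ℝ) (hl : ∀ i, 0 < l i)
    (hxper : ∀ i, φ (l i) (x i) = x i)
    (p : Fin n → ℕ) (hp : ∀ i, 0 < p i)
    (y : ℕ → X) (L : ℕ → ℝ) (hLpos : ∀ N, 0 < L N)
    (C : ℝ) (hC : ∀ N : ℕ, |L N - ∑ i, (N : ℝ) * (p i : ℝ) * l i| ≤ C)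
    (ε : ℕ → ℝ) (hε : Tendsto ε atTop (nhds 0))
    (s τ : ℕ → Fin n → ℝ)
    (hs0 : ∀ N i, 0 ≤ s N i)
    (hsL : ∀ N i, s N i + (N : ℝ) * (p i : ℝ) * l i ≤ L N)
    (hdisj : ∀ N : ℕ, ∀ i j : Fin n, i ≠ j →
      Disjoint (Set.Ioo (s N i) (s N i + (N : ℝ) * (p i : ℝ) * l i))
        (Set.Ioo (s N j) (s N j + (N : ℝ) * (p j : ℝ) * l j)))
    (hshadow : ∀ N : ℕ, ∀ i : Fin n, ∀ t ∈ Set.Icc (0:ℝ) ((N : ℝ) * (p i : ℝ) * l i),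
      dist (φ (s N i + t) (y N)) (φ (τ N i + t) (x i)) ≤ ε N) :
    ∀ f : X → ℝ, UniformContinuous f → (∃ B : ℝ, ∀ z, |f z| ≤ B) →
      Tendsto (fun N => ∫ z, f z ∂(periodicOrbitMeasure φ (y N) (L N))) atTop
        (nhds (∑ i, ((p i : ℝ) * l i / ∑ j, (p j : ℝ) * l j) *
          ∫ z, f z ∂(periodicOrbitMeasure φ (x i) (l i)))) := by
  intro f hfu ⟨B, hB⟩
  have hf := hfu.continuous
  set S := ∑ j, (p j : ℝ) * l j
  have hS : 0 < S := Finset.sum_pos (fun i _ => mul_pos (Nat.cast_pos.2 (hp i)) (hl i))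
    ⟨⟨0, hn⟩, Finset.mem_univ _⟩
  have hNS : ∀ N : ℕ, ∑ i, (N : ℝ) * p i * l i = N * S := fun N => by
    simp only [S, Finset.mul_sum, mul_assoc]
  set W := ∑ i, (p i : ℝ) * ∫ t in (0 : ℝ)..l i, f (φ t (x i))
  have hNW : ∀ N : ℕ, ∑ i, ((N * p i : ℕ) : ℝ) * ∫ t in (0 : ℝ)..l i, f (φ t (x i)) = N * W :=
    fun N => by simp only [W, Finset.mul_sum, Nat.cast_mul, mul_assoc]
  have hB0 : 0 ≤ B := (abs_nonneg _).trans (hB (y 0))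
  have htarget : ∑ i, ((p i : ℝ) * l i / S) * ∫ z, f z ∂(periodicOrbitMeasure φ (x i) (l i)) =
      W / S := by
    rw [Finset.sum_div]
    refine Finset.sum_congr rfl fun i _ => ?_
    rw [integral_periodicOrbitMeasure (hφ.continuous_orbit _) hf (hl i).le]
    field_simp [(hl i).ne']
  rw [htarget]
  refine Tendsto.congr (fun N => (integral_periodicOrbitMeasure (hφ.continuous_orbit _) hf
    (hLpos N).le).symm) (tendsto_div_of_abs_sub_natCast_mul_le (K := B * C) hS.ne'
      (fun η hη => ?_) fun N => hNS N ▸ hC N)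
  obtain ⟨δ, hδ, hfδ⟩ := Metric.uniformContinuous_iff.1 hfu (η / S) (div_pos hη hS)
  filter_upwards [hε.eventually (gt_mem_nhds hδ)] with N hN
  have hshadowing := abs_integral_orbit_sub_sum_le hφ hf hB (hLpos N).le (fun i => (hl i).le)
    hxper (fun i => N * p i) (fun i => by push_cast; ring) (hs0 N) (hsL N) (hdisj N)
    fun i t ht => (hfδ ((hshadow N i t ht).trans_lt hN)).le
  rw [hNS, hNW] at hshadowing
  have hgap : L N - N * S ≤ C := le_of_abs_le (hNS N ▸ hC N)
  calc _ ≤ η / S * (N * S) + B * (L N - N * S) := hshadowing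
    _ ≤ η * N + B * C := by
      rw [show η / S * (N * S) = η * N by field_simp]
      gcongr

/-- Weak-* convergence of the Dirac measures on long shadowing periodic
orbits towards the corresponding convex combination of the periodic-orbit measures. -/
theorem stmt18 {X : Type*} [MetricSpace X] [MeasurableSpace X] [BorelSpace X]
    (φ : ℝ → X → X) (hφ : FlowLike φ)
    (n : ℕ) (hn : 0 < n)
    (x : Fin n → X) (l : Fin n → ℝ) (hl : ∀ i, 0 < l i)
    (hxper : ∀ i, φ (l i) (x i) = x i)
    (p : Fin n → ℕ) (hp : ∀ i, 0 < p i)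
    (y : ℕ → X) (L : ℕ → ℝ) (hLpos : ∀ N, 0 < L N) (hyper : ∀ N, φ (L N) (y N) = y N)
    (C : ℝ) (hC : ∀ N : ℕ, |L N - ∑ i, (N : ℝ) * (p i : ℝ) * l i| ≤ C)
    (ε : ℕ → ℝ) (hεpos : ∀ N, 0 ≤ ε N) (hε : Tendsto ε atTop (nhds 0))
    (s τ : ℕ → Fin n → ℝ)
    (hs0 : ∀ N i, 0 ≤ s N i)
    (hsL : ∀ N i, s N i + (N : ℝ) * (p i : ℝ) * l i ≤ L N)
    (hdisj : ∀ N : ℕ, ∀ i j : Fin n, i ≠ j →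
      Disjoint (Set.Ioo (s N i) (s N i + (N : ℝ) * (p i : ℝ) * l i))
        (Set.Ioo (s N j) (s N j + (N : ℝ) * (p j : ℝ) * l j)))
    (hshadow : ∀ N : ℕ, ∀ i : Fin n, ∀ t ∈ Set.Icc (0:ℝ) ((N : ℝ) * (p i : ℝ) * l i),
      dist (φ (s N i + t) (y N)) (φ (τ N i + t) (x i)) ≤ ε N) :
    ∀ f : X → ℝ, UniformContinuous f → (∃ B : ℝ, ∀ z, |f z| ≤ B) →
      Tendsto (fun N => ∫ z, f z ∂(periodicOrbitMeasure φ (y N) (L N))) atTop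
        (nhds (∑ i, ((p i : ℝ) * l i / ∑ j, (p j : ℝ) * l j) *
          ∫ z, f z ∂(periodicOrbitMeasure φ (x i) (l i)))) :=
  stmt18_general φ hφ n hn x l hl hxper p hp y L hLpos C hC ε hε s τ hs0 hsL hdisj hshadow
end

section
/- Let X be a complete separable metric space with a continuous flow. For closed sets F₁, F₂ ⊆ X, open sets G ⊇ F₁, and parameters ε ∈ (0,1), η ∈ (0, 2ε²/3), r ∈ (0,1), m ∈ ℕ, the set ⋂_{t ≥ m} { μ ∈ M¹(X) : μ(F₁) ≥ ε, μ(F₂) ≥ ε, μ(G ∩ φ^{-t}G) ≤ r, r ≤ μ(F₁)² + η } is closed in the weak-* topology, and contains no Dirac measure supported on a periodic orbit. -/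
open MeasureTheory Filter Topology

/-! Closedness is portmanteau: `ν ↦ ν F` is upper semicontinuous for closed `F`, `ν ↦ ν U` is
lower semicontinuous for open `U`, and `x ↦ x ^ 2 + η` is continuous and monotone, so every
constraint cuts out a closed set. For the arc-length measure `μ` of an orbit of period `l`, pick
`n` with `n • l ≥ m`: the time-`n • l` map fixes the orbit pointwise, so
`μ (G ∩ φ_{n•l}⁻¹ G) = μ G ≥ μ F₁`, and the constraints force `μ F₁ ≤ μ F₁ ^ 2 + η` with
`ε ≤ μ F₁ ≤ 1 - ε`. Hence `η ≥ ε (1 - ε) ≥ ε ^ 2`, contradicting `η < 2 ε ^ 2 / 3`. -/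

namespace MeasureTheory.ProbabilityMeasure

variable {Ω : Type*} [MeasurableSpace Ω] [TopologicalSpace Ω] [OpensMeasurableSpace Ω]
  [HasOuterApproxClosed Ω]

theorem upperSemicontinuous_measure_of_isClosed {F : Set Ω} (hF : IsClosed F) :
    UpperSemicontinuous fun ν : ProbabilityMeasure Ω => ν.toMeasure F :=
  upperSemicontinuous_iff_limsup_le.2 fun _ => limsup_measure_closed_le_of_tendsto tendsto_id hF

theorem lowerSemicontinuous_measure_of_isOpen {G : Set Ω} (hG : IsOpen G) :
    LowerSemicontinuous fun ν : ProbabilityMeasure Ω => ν.toMeasure G :=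
  lowerSemicontinuous_iff_le_liminf.2 fun _ => le_liminf_measure_open_of_tendsto tendsto_id hG

end MeasureTheory.ProbabilityMeasure

namespace FlowLike

variable {Y : Type*} [TopologicalSpace Y] {φ : ℝ → Y → Y}

theorem continuous_apply (hφ : FlowLike φ) (t : ℝ) : Continuous (φ t) :=
  hφ.1.comp (continuous_const.prodMk continuous_id)

theorem apply_nsmul_eq (hφ : FlowLike φ) {l : ℝ} {x : Y} (hx : φ l x = x) (n : ℕ) :
    φ (n • l) x = x := by
  induction n with
  | zero => simpa using hφ.2.1 x
  | succ n ih => rw [succ_nsmul, hφ.2.2, hx, ih]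

theorem apply_orbit_eq (hφ : FlowLike φ) {T : ℝ} {x : Y} (hx : φ T x = x) (s : ℝ) :
    φ T (φ s x) = φ s x := by
  rw [← hφ.2.2, add_comm, hφ.2.2, hx]

theorem periodicOrbitMeasure_inter_preimage [MeasurableSpace Y] [BorelSpace Y]
    (hφ : FlowLike φ) {T : ℝ} {x₀ : Y} (hT : φ T x₀ = x₀) (l : ℝ) {A : Set Y}
    (hA : MeasurableSet A) :
    periodicOrbitMeasure φ x₀ l (A ∩ φ T ⁻¹' A) = periodicOrbitMeasure φ x₀ l A := by
  have horbit : Measurable fun s : ℝ => φ s x₀ :=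
    (hφ.1.comp (continuous_id.prodMk continuous_const)).measurable
  have hpre : (fun s : ℝ => φ s x₀) ⁻¹' (A ∩ φ T ⁻¹' A) = (fun s : ℝ => φ s x₀) ⁻¹' A := by
    ext s
    simp only [Set.mem_preimage, Set.mem_inter_iff, hφ.apply_orbit_eq hT s, and_self]
  have hTA : MeasurableSet (A ∩ φ T ⁻¹' A) :=
    hA.inter (hA.preimage (hφ.continuous_apply T).measurable)
  simp only [periodicOrbitMeasure, Measure.smul_apply, Measure.map_apply horbit hA,
    Measure.map_apply horbit hTA, hpre]

end FlowLike

theorem sq_le_of_le_sq_add {a b ε η : ℝ} (hε : 0 ≤ ε) (ha : ε ≤ a) (hb : ε ≤ b) (hab : a + b ≤ 1)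
    (h : a ≤ a ^ 2 + η) : ε ^ 2 ≤ η := by
  nlinarith [mul_nonneg (sub_nonneg.2 ha) (by linarith : 0 ≤ 1 - ε - a),
    mul_nonneg hε (by linarith : 0 ≤ 1 - 2 * ε)]

theorem MeasureTheory.sq_le_of_measure_le_measure_sq_add {Ω : Type*} [MeasurableSpace Ω]
    {ν : Measure Ω} [IsProbabilityMeasure ν] {A B : Set Ω} (hB : MeasurableSet B)
    (hAB : Disjoint A B) {ε η : ℝ} (hε : 0 ≤ ε) (hη : 0 ≤ η) (hεA : ENNReal.ofReal ε ≤ ν A)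
    (hεB : ENNReal.ofReal ε ≤ ν B) (h : ν A ≤ ν A ^ 2 + ENNReal.ofReal η) : ε ^ 2 ≤ η := by
  have hsum : ν.real A + ν.real B ≤ 1 := by
    rw [← measureReal_union hAB hB]
    exact measureReal_le_one
  refine sq_le_of_le_sq_add hε ((ENNReal.ofReal_le_iff_le_toReal (measure_ne_top ν A)).1 hεA)
    ((ENNReal.ofReal_le_iff_le_toReal (measure_ne_top ν B)).1 hεB) hsum ?_
  have := ENNReal.toReal_mono (by finiteness) h
  rwa [ENNReal.toReal_add (by finiteness) ENNReal.ofReal_ne_top, ENNReal.toReal_pow,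
    ENNReal.toReal_ofReal hη] at this

theorem stmt19_general {X : Type*} [MetricSpace X] [MeasurableSpace X] [BorelSpace X]
    (φ : ℝ → X → X) (hφ : FlowLike φ)
    (F₁ F₂ : Set X) (hF₁ : IsClosed F₁) (hF₂ : IsClosed F₂) (hdisj : Disjoint F₁ F₂)
    (G : Set X) (hG : IsOpen G) (hFG : F₁ ⊆ G)
    (ε η r : ℝ) (hε : ε ∈ Set.Ioo (0:ℝ) 1) (hη : η ∈ Set.Ioo (0:ℝ) (2 * ε ^ 2 / 3))
    (m : ℕ)
    (S : Set {μ : ProbabilityMeasure X // Invariant φ μ.toMeasure})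
    (hS : S = {μ : {μ : ProbabilityMeasure X // Invariant φ μ.toMeasure} |
      ∀ t : ℝ, (m : ℝ) ≤ t →
        ENNReal.ofReal ε ≤ (μ : ProbabilityMeasure X).toMeasure F₁ ∧
        ENNReal.ofReal ε ≤ (μ : ProbabilityMeasure X).toMeasure F₂ ∧
        (μ : ProbabilityMeasure X).toMeasure (G ∩ (φ t) ⁻¹' G) ≤ ENNReal.ofReal r ∧
        ENNReal.ofReal r ≤ ((μ : ProbabilityMeasure X).toMeasure F₁) ^ 2 +
          ENNReal.ofReal η}) :
    IsClosed S ∧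
    ∀ μ : {μ : ProbabilityMeasure X // Invariant φ μ.toMeasure},
      IsPeriodicOrbitMeasure φ (μ : ProbabilityMeasure X).toMeasure → μ ∉ S := by
  subst hS
  have usc₁ := ProbabilityMeasure.upperSemicontinuous_measure_of_isClosed hF₁
  have usc₂ := ProbabilityMeasure.upperSemicontinuous_measure_of_isClosed hF₂
  have usc_sq : UpperSemicontinuous fun ν : ProbabilityMeasure X =>
      ν.toMeasure F₁ ^ 2 + ENNReal.ofReal η :=
    ((ENNReal.continuous_pow 2).add continuous_const).comp_upperSemicontinuous usc₁
      fun _ _ h => add_le_add_left (pow_le_pow_left' h 2) _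
  refine ⟨?_, ?_⟩
  · simp only [Set.ofPred_forall, Set.ofPred_and]
    refine isClosed_iInter fun t => isClosed_iInter fun _ => ?_
    have lsc := ProbabilityMeasure.lowerSemicontinuous_measure_of_isOpen
      (hG.inter (hG.preimage (hφ.continuous_apply t)))
    exact ((usc₁.isClosed_preimage _).inter ((usc₂.isClosed_preimage _).inter
      ((lsc.isClosed_preimage _).inter (usc_sq.isClosed_preimage _)))).preimage
      continuous_subtype_val
  · rintro ⟨μ, _⟩ ⟨x₀, l, hl, hx, hμ⟩ hμS
    obtain ⟨n, hn⟩ := Archimedean.arch (m : ℝ) hl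
    obtain ⟨hεF₁, hεF₂, hrG, hrF₁⟩ := hμS (n • l) hn
    have hGG : μ.toMeasure (G ∩ φ (n • l) ⁻¹' G) = μ.toMeasure G := by
      rw [hμ]
      exact hφ.periodicOrbitMeasure_inter_preimage (hφ.apply_nsmul_eq hx n) l hG.measurableSet
    have hF₁F₁ : μ.toMeasure F₁ ≤ μ.toMeasure F₁ ^ 2 + ENNReal.ofReal η :=
      calc μ.toMeasure F₁ ≤ μ.toMeasure G := measure_mono hFG
        _ = μ.toMeasure (G ∩ φ (n • l) ⁻¹' G) := hGG.symm
        _ ≤ _ := hrG.trans hrF₁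
    have := sq_le_of_measure_le_measure_sq_add hF₂.measurableSet hdisj hε.1.le hη.1.le
      hεF₁ hεF₂ hF₁F₁
    linarith [hη.2, pow_pos hε.1 2]

/-- The sets used in the proof that generic measures are not strongly
mixing: for closed disjoint `F₁, F₂`, open `G ⊇ F₁` and the given parameters, the
intersection over `t ≥ m` of the constraint sets is weak-* closed and contains no
Dirac measure on a periodic orbit. -/
theorem stmt19 {X : Type*} [MetricSpace X] [PolishSpace X] [MeasurableSpace X] [BorelSpace X]
    (φ : ℝ → X → X) (hφ : FlowLike φ)
    (F₁ F₂ : Set X) (hF₁ : IsClosed F₁) (hF₂ : IsClosed F₂) (hdisj : Disjoint F₁ F₂)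
    (G : Set X) (hG : IsOpen G) (hFG : F₁ ⊆ G)
    (ε η r : ℝ) (hε : ε ∈ Set.Ioo (0:ℝ) 1) (hη : η ∈ Set.Ioo (0:ℝ) (2 * ε ^ 2 / 3))
    (hr : r ∈ Set.Ioo (0:ℝ) 1) (m : ℕ)
    (S : Set {μ : ProbabilityMeasure X // Invariant φ μ.toMeasure})
    (hS : S = {μ : {μ : ProbabilityMeasure X // Invariant φ μ.toMeasure} |
      ∀ t : ℝ, (m : ℝ) ≤ t →
        ENNReal.ofReal ε ≤ (μ : ProbabilityMeasure X).toMeasure F₁ ∧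
        ENNReal.ofReal ε ≤ (μ : ProbabilityMeasure X).toMeasure F₂ ∧
        (μ : ProbabilityMeasure X).toMeasure (G ∩ (φ t) ⁻¹' G) ≤ ENNReal.ofReal r ∧
        ENNReal.ofReal r ≤ ((μ : ProbabilityMeasure X).toMeasure F₁) ^ 2 +
          ENNReal.ofReal η}) :
    IsClosed S ∧
    ∀ μ : {μ : ProbabilityMeasure X // Invariant φ μ.toMeasure},
      IsPeriodicOrbitMeasure φ (μ : ProbabilityMeasure X).toMeasure → μ ∉ S :=
  stmt19_general φ hφ F₁ F₂ hF₁ hF₂ hdisj G hG hFG ε η r hε hη m S hS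
end
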